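/- arXiv:2205.12204 — 4 statements merged into one kernel-verified Lean document; each statement's English description precedes it below -/
import Mathlib

section
/- If S < C·σ²/φ(1), then for every θ the first-order condition (S/σ)·φ((θ−m)/σ) = C·m has exactly one solution m in (0, ∞), and this m is the unique global maximizer of u(·; θ) on [0, ∞). -/
open MeasureTheory Filter Set

/-- Standard normal probability density function. -/
noncomputable def stdphi (z : ℝ) : ℝ := (Real.sqrt (2 * Real.pi))⁻¹ * Real.exp (-z ^ 2 / 2)

/-- Standard normal cumulative distribution function. -/
noncomputable def stdPhi (x : ℝ) : ℝ := ∫ t in Set.Iic x, stdphi t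

/-!
The marginal payoff `g(m) = (S/σ)·φ((θ-m)/σ) - C·m` has derivative `(S/σ²)·zφ(z) - C` with
`z = (θ-m)/σ`. Since `zφ(z) ≤ φ(1)`, the hypothesis makes `g` strictly decreasing; as `g(0) > 0`
and `g(m) → -∞`, it has exactly one zero `m > 0`. The payoff increases before `m` and decreases
after it, so `m` is its unique maximizer on `[0, ∞)`.
-/

open Real

lemma stdphi_pos (z : ℝ) : 0 < stdphi z := by
  unfold stdphi
  positivity

lemma stdphi_neg (z : ℝ) : stdphi (-z) = stdphi z := by
  simp only [stdphi, neg_sq]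

lemma stdphi_le_stdphi_zero (z : ℝ) : stdphi z ≤ stdphi 0 := by
  unfold stdphi
  gcongr _ * exp ?_
  nlinarith [sq_nonneg z]

lemma mul_stdphi_le_stdphi_one (z : ℝ) : z * stdphi z ≤ stdphi 1 := by
  -- `z ≤ (z² + 1)/2 ≤ exp ((z² - 1)/2)`, so `z · exp (-z²/2) ≤ exp (-1/2)`.
  have hz : z ≤ exp ((z ^ 2 - 1) / 2) := by
    nlinarith [add_one_le_exp ((z ^ 2 - 1) / 2), sq_nonneg (z - 1)]
  have key : z * exp (-z ^ 2 / 2) ≤ exp (-1 ^ 2 / 2) :=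
    calc z * exp (-z ^ 2 / 2) ≤ exp ((z ^ 2 - 1) / 2) * exp (-z ^ 2 / 2) := by gcongr
      _ = exp (-1 ^ 2 / 2) := by rw [← exp_add]; ring_nf
  calc z * stdphi z = (√(2 * π))⁻¹ * (z * exp (-z ^ 2 / 2)) := by unfold stdphi; ring
    _ ≤ stdphi 1 := by unfold stdphi; gcongr

lemma hasDerivAt_stdphi (z : ℝ) : HasDerivAt stdphi (-z * stdphi z) z := by
  have hexp : HasDerivAt (fun w : ℝ => -w ^ 2 / 2) (-z) z := by
    refine ((hasDerivAt_pow 2 z).neg.div_const 2).congr_deriv ?_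
    push_cast
    ring
  refine (hexp.exp.const_mul (√(2 * π))⁻¹).congr_deriv ?_
  unfold stdphi
  ring

lemma continuous_stdphi : Continuous stdphi := by
  unfold stdphi
  fun_prop

lemma integrable_stdphi : Integrable stdphi := by
  convert (integrable_exp_neg_mul_sq (by norm_num : (0 : ℝ) < 1 / 2)).const_mul (√(2 * π))⁻¹
    using 2 with z
  unfold stdphi
  ring_nf

lemma hasDerivAt_stdPhi (x : ℝ) : HasDerivAt stdPhi (stdphi x) x := by
  have h := (continuous_stdphi.integral_hasStrictDerivAt 0 x).hasDerivAt.const_add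
    (∫ t in Iic 0, stdphi t)
  refine h.congr_of_eventuallyEq (Eventually.of_forall fun y => ?_)
  simp only [stdPhi, ← intervalIntegral.integral_Iic_sub_Iic integrable_stdphi.integrableOn
    integrable_stdphi.integrableOn, add_sub_cancel]

lemma apply_lt_apply_of_hasDerivAt_of_strictAnti {f f' : ℝ → ℝ}
    (hf : ∀ x, HasDerivAt f (f' x) x) (hf' : StrictAnti f') {m x : ℝ} (hm : f' m = 0)
    (hx : x ≠ m) : f x < f m := by
  have hcont : Continuous f := continuous_iff_continuousAt.2 fun x => (hf x).continuousAt
  have hderiv : ∀ s : Set ℝ, ∀ y ∈ interior s, HasDerivWithinAt f (f' y) (interior s) y :=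
    fun _ y _ => (hf y).hasDerivWithinAt
  rcases hx.lt_or_gt with hxm | hmx
  · have hmono : StrictMonoOn f (Iic m) :=
      strictMonoOn_of_hasDerivWithinAt_pos (convex_Iic m) hcont.continuousOn
        (hderiv _) fun y hy => by rw [interior_Iic] at hy; exact hm ▸ hf' hy
    exact hmono hxm.le (mem_Iic.2 le_rfl) hxm
  · have hanti : StrictAntiOn f (Ici m) :=
      strictAntiOn_of_hasDerivWithinAt_neg (convex_Ici m) hcont.continuousOn
        (hderiv _) fun y hy => by rw [interior_Ici] at hy; exact hm ▸ hf' hy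
    exact hanti (mem_Ici.2 le_rfl) hmx.le hmx

section Payoff

variable (S C σ θ : ℝ)

noncomputable def payoff (m : ℝ) : ℝ := S * stdPhi ((m - θ) / σ) - C / 2 * m ^ 2

noncomputable def marginalPayoff (m : ℝ) : ℝ := S / σ * stdphi ((θ - m) / σ) - C * m

lemma hasDerivAt_payoff (m : ℝ) : HasDerivAt (payoff S C σ θ) (marginalPayoff S C σ θ m) m := by
  have hz : HasDerivAt (fun m => (m - θ) / σ) σ⁻¹ m := by
    simpa using ((hasDerivAt_id m).sub_const θ).div_const σ
  have h := (((hasDerivAt_stdPhi _).comp m hz).const_mul S).sub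
    ((hasDerivAt_pow 2 m).const_mul (C / 2))
  refine h.congr_deriv ?_
  rw [marginalPayoff, show (θ - m) / σ = -((m - θ) / σ) by ring, stdphi_neg]
  push_cast
  ring

lemma hasDerivAt_marginalPayoff (m : ℝ) :
    HasDerivAt (marginalPayoff S C σ θ)
      (S / σ ^ 2 * ((θ - m) / σ * stdphi ((θ - m) / σ)) - C) m := by
  have hz : HasDerivAt (fun m => (θ - m) / σ) (-1 / σ) m := by
    simpa using ((hasDerivAt_id m).const_sub θ).div_const σ
  have h := (((hasDerivAt_stdphi _).comp m hz).const_mul (S / σ)).sub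
    ((hasDerivAt_id m).const_mul C)
  refine h.congr_deriv ?_
  ring

lemma continuous_marginalPayoff : Continuous (marginalPayoff S C σ θ) :=
  continuous_iff_continuousAt.2 fun m => (hasDerivAt_marginalPayoff S C σ θ m).continuousAt

lemma marginalPayoff_strictAnti (hS : 0 ≤ S) (h : S / σ ^ 2 * stdphi 1 < C) :
    StrictAnti (marginalPayoff S C σ θ) :=
  strictAnti_of_hasDerivAt_neg (hasDerivAt_marginalPayoff S C σ θ) fun m => by
    have := mul_le_mul_of_nonneg_left (mul_stdphi_le_stdphi_one ((θ - m) / σ))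
      (by positivity : 0 ≤ S / σ ^ 2)
    linarith

lemma exists_pos_marginalPayoff_eq_zero (hS : 0 < S) (hC : 0 < C) (hσ : 0 < σ) :
    ∃ m, 0 < m ∧ marginalPayoff S C σ θ m = 0 := by
  have h0 : 0 < marginalPayoff S C σ θ 0 := by
    simp only [marginalPayoff, mul_zero, sub_zero]
    exact mul_pos (div_pos hS hσ) (stdphi_pos _)
  have hSσ : 0 ≤ S / σ := (div_pos hS hσ).le
  set M := (S / σ * stdphi 0 + 1) / C
  have hM0 : 0 ≤ M := by have := stdphi_pos 0; positivity
  have hneg : marginalPayoff S C σ θ M < 0 := by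
    have hCM : C * M = S / σ * stdphi 0 + 1 := mul_div_cancel₀ _ hC.ne'
    have := mul_le_mul_of_nonneg_left (stdphi_le_stdphi_zero ((θ - M) / σ)) hSσ
    rw [marginalPayoff]
    linarith
  obtain ⟨m, hmM, hm⟩ := intermediate_value_Icc' hM0
    (continuous_marginalPayoff S C σ θ).continuousOn ⟨hneg.le, h0.le⟩
  exact ⟨m, hmM.1.lt_of_ne (by rintro rfl; exact h0.ne' hm), hm⟩

end Payoff

/-- If `S < C·σ²/φ(1)`, then for every `θ` the first-order condition
`(S/σ)·φ((θ−m)/σ) = C·m` has exactly one solution `m ∈ (0, ∞)`, and this `m` is the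
unique global maximizer of `u(·; θ)` on `[0, ∞)`. -/
theorem stmt4 (S C σ : ℝ) (hS : 0 < S) (hC : 0 < C) (hσ : 0 < σ)
    (hlt : S < C * σ ^ 2 / stdphi 1) :
    ∀ θ : ℝ, ∃ m : ℝ,
      0 < m ∧
      S / σ * stdphi ((θ - m) / σ) = C * m ∧
      IsMaxOn (fun m' : ℝ => S * stdPhi ((m' - θ) / σ) - C / 2 * m' ^ 2) (Set.Ici 0) m ∧
      (∀ m' : ℝ, 0 < m' → S / σ * stdphi ((θ - m') / σ) = C * m' → m' = m) ∧
      (∀ m' : ℝ, m' ∈ Set.Ici (0 : ℝ) →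
        IsMaxOn (fun m'' : ℝ => S * stdPhi ((m'' - θ) / σ) - C / 2 * m'' ^ 2)
          (Set.Ici 0) m' → m' = m) := by
  intro θ
  have hcond : S / σ ^ 2 * stdphi 1 < C := by
    rw [div_mul_eq_mul_div, div_lt_iff₀ (by positivity)]
    exact (lt_div_iff₀ (stdphi_pos 1)).1 hlt
  have hanti := marginalPayoff_strictAnti S C σ θ hS.le hcond
  obtain ⟨m, hm0, hm⟩ := exists_pos_marginalPayoff_eq_zero S C σ θ hS hC hσ
  have hmax : ∀ x ≠ m, payoff S C σ θ x < payoff S C σ θ m := fun _ hx =>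
    apply_lt_apply_of_hasDerivAt_of_strictAnti (hasDerivAt_payoff S C σ θ) hanti hm hx
  refine ⟨m, hm0, sub_eq_zero.1 hm, isMaxOn_iff.2 fun x _ => ?_,
    fun m' _ hm' => hanti.injective ?_, fun m' _ hm' => ?_⟩
  · rcases eq_or_ne x m with rfl | hx
    exacts [le_rfl, (hmax x hx).le]
  · rw [hm, marginalPayoff, hm', sub_self]
  · by_contra hne
    exact (isMaxOn_iff.1 hm' m (mem_Ici.2 hm0.le)).not_gt (hmax m' hne)
end

section
/- If families m_max(S), m_min(S), θ(S) satisfy 0 ≤ m_min(S) ≤ m_max(S) ≤ √(2S/C), u(m_max(S); θ(S)) = u(m_min(S); θ(S)) > 0 for all S, and Φ((m_max(S)−θ(S))/σ) → 1 while Φ((m_min(S)−θ(S))/σ) → 0 as S → ∞, then C·m_max(S)²/(2S) → 1 and C·m_min(S)²/(2S) → 0; i.e., m_max(S) = √(2S/C)·(1+o(1)) and m_min(S) = o(√(2S/C)). -/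
open MeasureTheory Filter Set

/-- If `0 ≤ m_min(S) ≤ m_max(S) ≤ √(2S/C)`, the payoffs at `m_max` and `m_min` are equal
and positive, and the selection rates tend to 1 and 0 respectively, then
`C·m_max(S)²/(2S) → 1` and `C·m_min(S)²/(2S) → 0`. -/
theorem stmt11 (C σ : ℝ) (hC : 0 < C) (hσ : 0 < σ)
    (mmax mmin θ : ℝ → ℝ)
    (hbound : ∀ S > (0 : ℝ),
      0 ≤ mmin S ∧ mmin S ≤ mmax S ∧ mmax S ≤ Real.sqrt (2 * S / C))
    (heq : ∀ S > (0 : ℝ),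
      S * stdPhi ((mmax S - θ S) / σ) - C / 2 * (mmax S) ^ 2 =
        S * stdPhi ((mmin S - θ S) / σ) - C / 2 * (mmin S) ^ 2)
    (hpos : ∀ S > (0 : ℝ),
      0 < S * stdPhi ((mmax S - θ S) / σ) - C / 2 * (mmax S) ^ 2)
    (hxmax : Filter.Tendsto (fun S => stdPhi ((mmax S - θ S) / σ)) Filter.atTop (nhds 1))
    (hxmin : Filter.Tendsto (fun S => stdPhi ((mmin S - θ S) / σ)) Filter.atTop (nhds 0)) :
    Filter.Tendsto (fun S => C * (mmax S) ^ 2 / (2 * S)) Filter.atTop (nhds 1) ∧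
    Filter.Tendsto (fun S => C * (mmin S) ^ 2 / (2 * S)) Filter.atTop (nhds 0) := by
  have hmin : Filter.Tendsto (fun S => C * (mmin S) ^ 2 / (2 * S)) Filter.atTop (nhds 0) := by
    apply tendsto_of_tendsto_of_tendsto_of_le_of_le' tendsto_const_nhds hxmin
    · filter_upwards [eventually_gt_atTop (0:ℝ)] with S hS
      have h := (hbound S hS).1
      positivity
    · filter_upwards [eventually_gt_atTop (0:ℝ)] with S hS
      have h1 := hpos S hS
      have h2 := heq S hS
      rw [div_le_iff₀ (by linarith)]
      nlinarith
  refine ⟨?_, hmin⟩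
  have hdiff : Filter.Tendsto
      (fun S => (stdPhi ((mmax S - θ S) / σ) - stdPhi ((mmin S - θ S) / σ))
        + C * (mmin S) ^ 2 / (2 * S)) Filter.atTop (nhds 1) := by
    have := (hxmax.sub hxmin).add hmin
    simpa using this
  apply hdiff.congr'
  filter_upwards [eventually_gt_atTop (0:ℝ)] with S hS
  have h2 := heq S hS
  field_simp
  nlinarith
end

section
/- Assume T : ℝ → ℝ is differentiable on ℝ ∖ {θ*} with T'(θ) < 1 there, T has a downward jump at θ* (i.e., lim_{θ→θ*+} T(θ) ≤ lim_{θ→θ*−} T(θ), with T upper hemicontinuous taking the interval between these limits at θ*), and there exist θ₀ ≤ θ₁ such that θ₀ ≤ T(θ) ≤ θ₁ for all θ (componentwise for the set-valued point). Then the fixed-point problem θ ∈ T(θ) has exactly one solution. -/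
open MeasureTheory Filter Set

/-- A set-valued map `T` on ℝ that is single-valued and differentiable with derivative `< 1`
away from a single point `θ*`, has a downward jump at `θ*` where it takes the whole interval
between its one-sided limits, and is uniformly bounded in `[θ₀, θ₁]`, has exactly one fixed
point `θ ∈ T(θ)`. -/
theorem stmt17 (T : ℝ → Set ℝ) (t t' : ℝ → ℝ) (θstar θ₀ θ₁ R L : ℝ)
    (hθ : θ₀ ≤ θ₁)
    (hsingle : ∀ θ : ℝ, θ ≠ θstar → T θ = {t θ})
    (hderiv : ∀ θ : ℝ, θ ≠ θstar → HasDerivAt t (t' θ) θ)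
    (hlt : ∀ θ : ℝ, θ ≠ θstar → t' θ < 1)
    (hR : Filter.Tendsto t (nhdsWithin θstar (Set.Ioi θstar)) (nhds R))
    (hL : Filter.Tendsto t (nhdsWithin θstar (Set.Iio θstar)) (nhds L))
    (hRL : R ≤ L)
    (hatstar : T θstar = Set.Icc R L)
    (hbound : ∀ θ : ℝ, T θ ⊆ Set.Icc θ₀ θ₁) :
    ∃! θ : ℝ, θ ∈ T θ := by
  set g : ℝ → ℝ := fun θ => t θ - θ with hg
  have hgd : ∀ θ : ℝ, θ ≠ θstar → HasDerivAt g (t' θ - 1) θ := fun θ hθ' =>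
    (hderiv θ hθ').sub (hasDerivAt_id θ)
  have hcont : ∀ θ : ℝ, θ ≠ θstar → ContinuousAt g θ := fun θ hθ' =>
    (hgd θ hθ').continuousAt
  -- strict antitonicity on both sides
  have hanti : ∀ s : Set ℝ, Convex ℝ s → IsOpen s → (θstar ∉ s) → StrictAntiOn g s := by
    intro s hconv hopen hns
    refine strictAntiOn_of_deriv_neg hconv (fun x hx => (hcont x (fun h => hns (h ▸ hx))).continuousWithinAt) ?_
    intro x hx
    rw [hopen.interior_eq] at hx
    have hne : x ≠ θstar := fun h => hns (h ▸ hx)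
    rw [(hgd x hne).deriv]
    linarith [hlt x hne]
  have hantiL : StrictAntiOn g (Iio θstar) := hanti _ (convex_Iio _) isOpen_Iio (by simp)
  have hantiR : StrictAntiOn g (Ioi θstar) := hanti _ (convex_Ioi _) isOpen_Ioi (by simp)
  -- limits of g at θstar
  have hidL : Tendsto (fun θ : ℝ => θ) (nhdsWithin θstar (Iio θstar)) (nhds θstar) :=
    (continuous_id.tendsto θstar).mono_left nhdsWithin_le_nhds
  have hidR : Tendsto (fun θ : ℝ => θ) (nhdsWithin θstar (Ioi θstar)) (nhds θstar) :=
    (continuous_id.tendsto θstar).mono_left nhdsWithin_le_nhds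
  have hgL : Tendsto g (nhdsWithin θstar (Iio θstar)) (nhds (L - θstar)) := hL.sub hidL
  have hgR : Tendsto g (nhdsWithin θstar (Ioi θstar)) (nhds (R - θstar)) := hR.sub hidR
  -- lower bound on the left: for x < θstar, L - θstar < g x
  have hlb : ∀ x : ℝ, x < θstar → L - θstar < g x := by
    intro x hx
    set z := (x + θstar) / 2 with hz
    have hxz : x < z := by simp [hz]; linarith
    have hzs : z < θstar := by simp [hz]; linarith
    have h1 : g z < g x := hantiL hx hzs hxz
    have h2 : L - θstar ≤ g z := by
      refine le_of_tendsto hgL ?_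
      filter_upwards [Ioo_mem_nhdsLT hzs] with w hw
      exact (hantiL hzs hw.2 hw.1).le
    linarith
  -- upper bound on the right: for y > θstar, g y < R - θstar
  have hub : ∀ y : ℝ, θstar < y → g y < R - θstar := by
    intro y hy
    set z := (θstar + y) / 2 with hz
    have hzy : z < y := by simp [hz]; linarith
    have hsz : θstar < z := by simp [hz]; linarith
    have h1 : g y < g z := hantiR hsz (hsz.trans hzy) hzy
    have h2 : g z ≤ R - θstar := by
      refine ge_of_tendsto hgR ?_
      filter_upwards [Ioo_mem_nhdsGT hsz] with w hw
      exact (hantiR hw.1 hsz hw.2).le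
    linarith
  -- characterize fixed points
  have hbt : ∀ θ : ℝ, θ ≠ θstar → t θ ∈ Icc θ₀ θ₁ := by
    intro θ hθ'
    have := hbound θ
    rw [hsingle θ hθ'] at this
    exact this rfl
  -- existence
  have hex : ∃ θ : ℝ, θ ∈ T θ := by
    rcases le_or_gt R θstar with hR1 | hR1
    · rcases le_or_gt θstar L with hL1 | hL1
      · exact ⟨θstar, by rw [hatstar]; exact ⟨hR1, hL1⟩⟩
      · -- L < θstar : root on the left
        obtain ⟨b, hb1, hb2⟩ : ∃ b, b < θstar ∧ g b < 0 := by
          have : ∀ᶠ w in nhdsWithin θstar (Iio θstar), g w < 0 :=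
            hgL.eventually (eventually_lt_nhds (by linarith : L - θstar < 0))
          rcases (this.and self_mem_nhdsWithin).exists with ⟨b, h1, h2⟩
          exact ⟨b, h2, h1⟩
        set a := min θ₀ b - 1 with ha
        have hab : a < b := by
          have := min_le_right θ₀ b; simp [ha]; linarith
        have has : a < θstar := hab.trans hb1
        have hga : 0 < g a := by
          have h1 : θ₀ ≤ t a := (hbt a has.ne).1
          have h2 : a < θ₀ := by have := min_le_left θ₀ b; simp [ha]; linarith
          simp only [hg]; linarith
        have hc : (0 : ℝ) ∈ Icc (g b) (g a) := ⟨hb2.le, hga.le⟩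
        have hcontOn : ContinuousOn g (Icc a b) := fun x hx =>
          (hcont x (fun h => absurd (h ▸ hx.2) (not_le.mpr hb1))).continuousWithinAt
        obtain ⟨c, hc1, hc2⟩ := intermediate_value_Icc' hab.le hcontOn hc
        have hcs : c ≠ θstar := (hc1.2.trans_lt hb1).ne
        refine ⟨c, ?_⟩
        rw [hsingle c hcs]
        have : t c - c = 0 := hc2
        simp only [mem_singleton_iff]; linarith
    · -- θstar < R : root on the right
      obtain ⟨a, ha1, ha2⟩ : ∃ a, θstar < a ∧ 0 < g a := by
        have : ∀ᶠ w in nhdsWithin θstar (Ioi θstar), 0 < g w :=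
          hgR.eventually (eventually_gt_nhds (by linarith : (0:ℝ) < R - θstar))
        rcases (this.and self_mem_nhdsWithin).exists with ⟨a, h1, h2⟩
        exact ⟨a, h2, h1⟩
      set b := max θ₁ a + 1 with hb
      have hab : a < b := by
        have := le_max_right θ₁ a; simp [hb]; linarith
      have hbs : θstar < b := ha1.trans hab
      have hgb : g b < 0 := by
        have h1 : t b ≤ θ₁ := (hbt b hbs.ne').2
        have h2 : θ₁ < b := by have := le_max_left θ₁ a; simp [hb]; linarith
        simp only [hg]; linarith
      have hc : (0 : ℝ) ∈ Icc (g b) (g a) := ⟨hgb.le, ha2.le⟩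
      have hcontOn : ContinuousOn g (Icc a b) := fun x hx =>
        (hcont x (fun h => absurd (h ▸ hx.1) (not_le.mpr ha1))).continuousWithinAt
      obtain ⟨c, hc1, hc2⟩ := intermediate_value_Icc' hab.le hcontOn hc
      have hcs : c ≠ θstar := (ha1.trans_le hc1.1).ne'
      refine ⟨c, ?_⟩
      rw [hsingle c hcs]
      have : t c - c = 0 := hc2
      simp only [mem_singleton_iff]; linarith
  -- uniqueness helper
  have hfix : ∀ p : ℝ, p ≠ θstar → p ∈ T p → g p = 0 := by
    intro p hp hmem
    rw [hsingle p hp, mem_singleton_iff] at hmem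
    simp only [hg]; linarith [hmem.symm.le, hmem.le]
  have haux : ∀ p q : ℝ, p ∈ T p → q ∈ T q → p < q → False := by
    intro p q hp hq hpq
    by_cases hps : p = θstar
    · -- p = θstar, so R ≤ θstar ≤ L, and q > θstar fixed
      rw [hps, hatstar] at hp
      have hpq' : θstar < q := hps ▸ hpq
      have hq0 : g q = 0 := hfix q hpq'.ne' hq
      have := hub q hpq'
      linarith [hp.1]
    · by_cases hqs : q = θstar
      · rw [hqs, hatstar] at hq
        have hpq' : p < θstar := hqs ▸ hpq
        have hp0 : g p = 0 := hfix p hps hp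
        have := hlb p hpq'
        linarith [hq.2]
      · have hp0 : g p = 0 := hfix p hps hp
        have hq0 : g q = 0 := hfix q hqs hq
        rcases lt_or_gt_of_ne hps with h1 | h1
        · rcases lt_or_gt_of_ne hqs with h2 | h2
          · have := hantiL h1 h2 hpq; linarith
          · have := hlb p h1
            have := hub q h2
            linarith
        · have h2 : θstar < q := h1.trans hpq
          have := hantiR h1 h2 hpq; linarith
  obtain ⟨c, hc⟩ := hex
  refine ⟨c, hc, fun y hy => ?_⟩
  rcases lt_trichotomy y c with h | h | h
  · exact absurd (haux y c hy hc h) (fun f => f)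
  · exact h
  · exact absurd (haux c y hc hy h) (fun f => f)
end

section
/- If m(θ) is a differentiable FOC branch with m(θ) > θ and m(θ)(m(θ)−θ) → ∞ along a parametrized family (so that dm/dθ = m(m−θ)/(m(m−θ)+σ²) → 1), and θ(S) → ∞ with θ(S) differentiable increasing in S, then m(θ(S))/θ(S) → 1 as S → ∞ (by l'Hôpital's rule). -/
open MeasureTheory Filter Set

/-- If `m(θ)` is a differentiable FOC branch with `m(θ) > θ`, derivative
`m(m−θ)/(m(m−θ)+σ²)`, and `m(θ(S))·(m(θ(S))−θ(S)) → ∞` while `θ(S) → ∞` along a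
differentiable strictly increasing parametrization, then `m(θ(S))/θ(S) → 1`. -/
theorem stmt18 (σ : ℝ) (hσ : 0 < σ) (m θ : ℝ → ℝ)
    (hderiv : ∀ x : ℝ,
      HasDerivAt m (m x * (m x - x) / (m x * (m x - x) + σ ^ 2)) x)
    (hgt : ∀ x : ℝ, m x > x)
    (hSOC : ∀ x : ℝ, m x * (m x - x) + σ ^ 2 > 0)
    (hprod : Filter.Tendsto (fun S => m (θ S) * (m (θ S) - θ S)) Filter.atTop Filter.atTop)
    (hθtop : Filter.Tendsto θ Filter.atTop Filter.atTop)
    (hθdiff : Differentiable ℝ θ)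
    (hθmono : StrictMono θ) :
    Filter.Tendsto (fun S => m (θ S) / θ S) Filter.atTop (nhds 1) := by

  -- m(x) - x is antitone since its derivative is a/(a+σ²) - 1 ≤ 0
  have hg : ∀ x : ℝ, HasDerivAt (fun y => m y - y)
      (m x * (m x - x) / (m x * (m x - x) + σ ^ 2) - 1) x :=
    fun x => (hderiv x).sub (hasDerivAt_id x)
  have hanti : Antitone (fun y => m y - y) := by
    apply antitone_of_deriv_nonpos
    · exact fun x => (hg x).differentiableAt
    · intro x
      rw [(hg x).deriv]
      have h1 : m x * (m x - x) / (m x * (m x - x) + σ ^ 2) ≤ 1 := by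
        rw [div_le_one (hSOC x)]; nlinarith [hσ]
      linarith
  set C := m (θ 0) - θ 0 with hCdef
  have hC : 0 < C := sub_pos.mpr (hgt (θ 0))
  have hev : ∀ᶠ S in Filter.atTop, θ 0 ≤ θ S ∧ 1 ≤ θ S := by
    filter_upwards [hθtop.eventually_ge_atTop (θ 0), hθtop.eventually_ge_atTop 1] with S h1 h2
    exact ⟨h1, h2⟩
  have hupper : Filter.Tendsto (fun S => 1 + C / θ S) Filter.atTop (nhds 1) := by
    have : Filter.Tendsto (fun S => C / θ S) Filter.atTop (nhds 0) :=
      Filter.Tendsto.div_atTop tendsto_const_nhds hθtop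
    simpa using tendsto_const_nhds.add this
  apply tendsto_of_tendsto_of_tendsto_of_le_of_le' (tendsto_const_nhds) hupper
  · filter_upwards [hev] with S hS
    have hθpos : (0:ℝ) < θ S := lt_of_lt_of_le one_pos hS.2
    rw [le_div_iff₀ hθpos, one_mul]
    exact le_of_lt (hgt (θ S))
  · filter_upwards [hev] with S hS
    have hθpos : (0:ℝ) < θ S := lt_of_lt_of_le one_pos hS.2
    have hle : m (θ S) - θ S ≤ C := hanti hS.1
    have : m (θ S) / θ S ≤ (θ S + C) / θ S := by
      gcongr
      linarith
    calc m (θ S) / θ S ≤ (θ S + C) / θ S := this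
      _ = 1 + C / θ S := by field_simp
end
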